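/- In the polynomial ring ℂ[x, y, z], the family consisting of the polynomials x^a z^b (xy − z)^c for all (a,b,c) ∈ ℕ³, together with the polynomials y^{a+1} z^b (xy − z)^c for all (a,b,c) ∈ ℕ³, is a basis of ℂ[x, y, z] as a ℂ-vector space; that is, the indexed family over the disjoint union ℕ³ ⊔ ℕ³ is linearly independent and spans ℂ[x, y, z]. -/

import Mathlib

open MvPolynomial

/-- The dual canonical basis family of `ℂ[N] = ℂ[x, y, z]` for `G = SL₃` :
the polynomials `x^a z^b (xy − z)^c` together with the polynomials
`y^{a+1} z^b (xy − z)^c`, indexed by the disjoint union `ℕ³ ⊔ ℕ³`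
(here `x = X 0`, `y = X 1`, `z = X 2`). -/
noncomputable def dualCanonicalFamily :
    (ℕ × ℕ × ℕ) ⊕ (ℕ × ℕ × ℕ) → MvPolynomial (Fin 3) ℂ :=
  Sum.elim
    (fun p => X 0 ^ p.1 * X 2 ^ p.2.1 * (X 0 * X 1 - X 2) ^ p.2.2)
    (fun p => X 1 ^ (p.1 + 1) * X 2 ^ p.2.1 * (X 0 * X 1 - X 2) ^ p.2.2)

/-!
For the lexicographic monomial order with `x > y > z`, the polynomial `x^a z^b (xy − z)^c` is
monic with leading monomial `x^(a+c) y^c z^b`, and `y^(a+1) z^b (xy − z)^c` is monic with leading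
monomial `x^c y^(a+1+c) z^b`. These leading monomials run through every monomial exactly once.
Distinct leading monomials give linear independence (look at the coefficient of the largest one
in a vanishing combination), and leading monomials exhausting all monomials, with unit leading
coefficients, give spanning by induction along the well-founded monomial order.
-/

namespace MonomialOrder

variable {σ R ι : Type*} [CommRing R] (m : MonomialOrder σ)

theorem linearIndependent_of_injective_degree {f : ι → MvPolynomial σ R}
    (hf : ∀ i, m.leadingCoeff (f i) ∈ nonZeroDivisors R)
    (hinj : Function.Injective (m.degree ∘ f)) : LinearIndependent R f := by
  classical
  rw [linearIndependent_iff']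
  intro s g hsum
  by_contra! hne
  obtain ⟨i, hi, hgi⟩ := hne
  obtain ⟨j, hj, hmax⟩ := (s.filter (g · ≠ 0)).exists_max_image (m.toSyn ∘ m.degree ∘ f)
    ⟨i, Finset.mem_filter.mpr ⟨hi, hgi⟩⟩
  rw [Finset.mem_filter] at hj
  have hcoeff := congrArg (coeff (m.degree (f j))) hsum
  rw [coeff_sum, coeff_zero, Finset.sum_eq_single j] at hcoeff
  · exact hj.2 ((hf j).2 _ hcoeff)
  · intro k hk hkj
    by_cases hgk : g k = 0
    · rw [hgk, zero_smul, coeff_zero]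
    have hlt : m.degree (f k) ≺[m] m.degree (f j) :=
      lt_of_le_of_ne (hmax k (Finset.mem_filter.mpr ⟨hk, hgk⟩))
        (m.toSyn.injective.ne (hinj.ne hkj))
    rw [coeff_smul, coeff_eq_zero_of_lt hlt, smul_zero]
  · exact fun h => absurd hj.1 h

theorem support_monomial_degree_sub_smul_lt {p : MvPolynomial σ R}
    (hp : IsUnit (m.leadingCoeff p)) :
    ∀ s ∈ (monomial (m.degree p) (1 : R) - (↑hp.unit⁻¹ : R) • p).support,
      s ≺[m] m.degree p := by
  classical
  intro s hs
  rw [mem_support_iff, coeff_sub, coeff_smul, coeff_monomial] at hs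
  obtain rfl | hsd := eq_or_ne s (m.degree p)
  · refine absurd ?_ hs
    rw [if_pos rfl, ← leadingCoeff, smul_eq_mul, hp.val_inv_mul, sub_self]
  · rw [if_neg hsd.symm, zero_sub, neg_ne_zero, smul_eq_mul] at hs
    exact lt_of_le_of_ne (m.le_degree (mem_support_iff.mpr (right_ne_zero_of_mul hs)))
      (m.toSyn.injective.ne hsd)

theorem span_eq_top_of_surjective_degree {f : ι → MvPolynomial σ R}
    (hf : ∀ i, IsUnit (m.leadingCoeff (f i)))
    (hsurj : Function.Surjective (m.degree ∘ f)) : Submodule.span R (Set.range f) = ⊤ := by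
  have hmonomial : ∀ d, monomial d (1 : R) ∈ Submodule.span R (Set.range f) := by
    intro d
    induction hd : m.toSyn d using WellFoundedLT.induction generalizing d with
    | ind e ih =>
    obtain ⟨i, rfl⟩ := hsurj d
    have hbelow :
        restrictSupport R {s | s ≺[m] m.degree (f i)} ≤ Submodule.span R (Set.range f) := by
      rw [restrictSupport_eq_span, Submodule.span_le]
      rintro _ ⟨s, hs, rfl⟩
      exact ih _ (hd ▸ hs) s rfl
    rw [← sub_add_cancel (monomial _ 1) ((↑(hf i).unit⁻¹ : R) • f i)]
    exact add_mem (hbelow (m.support_monomial_degree_sub_smul_lt (hf i)))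
      (Submodule.smul_mem _ _ (Submodule.subset_span ⟨i, rfl⟩))
  rw [eq_top_iff, ← (basisMonomials σ R).span_eq, coe_basisMonomials, Submodule.span_le]
  rintro _ ⟨d, rfl⟩
  exact hmonomial d

end MonomialOrder

open MonomialOrder Finsupp

section LexOnThreeVariables

variable {R : Type*} [CommRing R] [Nontrivial R]

lemma lex_degree_X_mul_X :
    lex.degree (X 0 * X 1 : MvPolynomial (Fin 3) R) = single 0 1 + single 1 1 := by
  classical
  rw [X, X, monomial_mul, one_mul, degree_monomial, if_neg one_ne_zero]

lemma lex_degree_X_lt_degree_X_mul_X :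
    lex.degree (X 2 : MvPolynomial (Fin 3) R) ≺[lex]
      lex.degree (X 0 * X 1 : MvPolynomial (Fin 3) R) := by
  rw [lex_degree_X_mul_X, degree_X, lex_lt_iff, Finsupp.Lex.lt_iff]
  exact ⟨0, fun j hj => absurd hj (Fin.not_lt_zero j), by simp⟩

lemma lex_degree_X_mul_X_sub_X :
    lex.degree (X 0 * X 1 - X 2 : MvPolynomial (Fin 3) R) = single 0 1 + single 1 1 := by
  rw [degree_sub_of_lt lex_degree_X_lt_degree_X_mul_X, lex_degree_X_mul_X]

lemma lex_monic_X_mul_X_sub_X : lex.Monic (X 0 * X 1 - X 2 : MvPolynomial (Fin 3) R) := by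
  rw [Monic, leadingCoeff_sub_of_lt lex_degree_X_lt_degree_X_mul_X]
  exact monic_X.mul monic_X

end LexOnThreeVariables

noncomputable def dualCanonicalExponent : (ℕ × ℕ × ℕ) ⊕ (ℕ × ℕ × ℕ) → Fin 3 →₀ ℕ :=
  Sum.elim (fun p => single 0 (p.1 + p.2.2) + single 1 p.2.2 + single 2 p.2.1)
    (fun p => single 0 p.2.2 + single 1 (p.1 + 1 + p.2.2) + single 2 p.2.1)

lemma dualCanonicalExponent_bijective : Function.Bijective dualCanonicalExponent := by
  constructor
  · rintro (⟨a, b, c⟩ | ⟨a, b, c⟩) (⟨a', b', c'⟩ | ⟨a', b', c'⟩) h <;>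
      have h0 := DFunLike.congr_fun h 0 <;> have h1 := DFunLike.congr_fun h 1 <;>
      have h2 := DFunLike.congr_fun h 2 <;>
      simp [dualCanonicalExponent] at h0 h1 h2 ⊢ <;> omega
  · intro d
    by_cases h : d 1 ≤ d 0
    · refine ⟨.inl (d 0 - d 1, d 2, d 1), ?_⟩
      ext j; fin_cases j <;> simp [dualCanonicalExponent]; omega
    · refine ⟨.inr (d 1 - d 0 - 1, d 2, d 0), ?_⟩
      ext j; fin_cases j <;> simp [dualCanonicalExponent]; omega

lemma lex_monic_dualCanonicalFamily (i : (ℕ × ℕ × ℕ) ⊕ (ℕ × ℕ × ℕ)) :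
    lex.Monic (dualCanonicalFamily i) := by
  rcases i with ⟨a, b, c⟩ | ⟨a, b, c⟩ <;>
    exact (monic_X.pow.mul monic_X.pow).mul lex_monic_X_mul_X_sub_X.pow

lemma lex_degree_dualCanonicalFamily (i : (ℕ × ℕ × ℕ) ⊕ (ℕ × ℕ × ℕ)) :
    lex.degree (dualCanonicalFamily i) = dualCanonicalExponent i := by
  rcases i with ⟨a, b, c⟩ | ⟨a, b, c⟩ <;>
  · simp only [dualCanonicalFamily, dualCanonicalExponent, Sum.elim_inl, Sum.elim_inr]
    rw [degree_mul, degree_mul, degree_pow, degree_pow, degree_pow, degree_X, degree_X,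
      lex_degree_X_mul_X_sub_X]
    · ext j; fin_cases j <;> simp
    all_goals simp [X_ne_zero, lex_monic_X_mul_X_sub_X.ne_zero]

theorem dualCanonicalFamily_isBasis :
    LinearIndependent ℂ dualCanonicalFamily ∧
      Submodule.span ℂ (Set.range dualCanonicalFamily) = ⊤ := by
  have hdegree : lex.degree ∘ dualCanonicalFamily = dualCanonicalExponent :=
    funext lex_degree_dualCanonicalFamily
  have hleading (i) : lex.leadingCoeff (dualCanonicalFamily i) = 1 :=
    lex_monic_dualCanonicalFamily i
  refine ⟨lex.linearIndependent_of_injective_degree (fun i => ?_) ?_,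
    lex.span_eq_top_of_surjective_degree (fun i => ?_) ?_⟩
  · rw [hleading]; exact one_mem _
  · rw [hdegree]; exact dualCanonicalExponent_bijective.injective
  · rw [hleading]; exact isUnit_one
  · rw [hdegree]; exact dualCanonicalExponent_bijective.surjective
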